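/- Define J₀ : ℝ → ℝ by J₀(x) = ∫₀¹ cos(x·cos(2πs)) ds. Then for every x ∈ [0, 2.4], J₀ is differentiable at x with derivative J₀'(x) = −∫₀¹ cos(2πs)·sin(x·cos(2πs)) ds, and this derivative satisfies J₀'(x) ≤ −x/8. -/

import Mathlib

/-!
For `u ≥ 0` we have `sin u ≥ u - u³/6`; since `c ↦ c sin(x c)` is even, this gives
`c sin(x c) ≥ x c² - x³ c⁴ / 6` for every real `c` when `x ≥ 0`. Integrating with `c = cos(2πs)`,
whose second and fourth moments over a period are `1/2` and `3/8`, yields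
`-J₀'(x) ≥ x/2 - x³/16`, and this is at least `x/8` as long as `x² ≤ 6`.
-/

noncomputable section

/-- The Bessel function of the first kind of order `0`. -/
noncomputable def J0 (x : ℝ) : ℝ :=
  ∫ s in (0:ℝ)..1, Real.cos (x * Real.cos (2 * Real.pi * s))

open Real intervalIntegral

theorem hasDerivAt_integral_cos_mul {g : ℝ → ℝ} (hg : Continuous g) (a b x : ℝ) :
    HasDerivAt (fun y => ∫ s in a..b, cos (y * g s))
      (-∫ s in a..b, g s * sin (x * g s)) x := by
  rw [← integral_neg]
  refine (hasDerivAt_integral_of_dominated_loc_of_deriv_le (F := fun y s => cos (y * g s))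
    (F' := fun y s => -(g s * sin (y * g s))) (bound := fun s => |g s|)
    Filter.univ_mem (.of_forall fun y => (by fun_prop : Continuous _).aestronglyMeasurable)
    ((by fun_prop : Continuous _).intervalIntegrable _ _)
    (by fun_prop : Continuous _).aestronglyMeasurable
    (.of_forall fun s _ y _ => ?_) ((by fun_prop : Continuous _).intervalIntegrable _ _)
    (.of_forall fun s _ y _ => ?_)).2
  · rw [norm_neg, norm_mul, Real.norm_eq_abs, Real.norm_eq_abs]
    exact mul_le_of_le_one_right (abs_nonneg _) (abs_sin_le_one _)
  · exact ((hasDerivAt_mul_const (g s)).cos).congr_deriv (by ring)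

theorem integral_cos_two_pi_mul_pow_add_two (n : ℕ) :
    ∫ s in (0:ℝ)..1, cos (2 * π * s) ^ (n + 2) =
      (n + 1) / (n + 2) * ∫ s in (0:ℝ)..1, cos (2 * π * s) ^ n := by
  have h2π : 2 * π ≠ 0 := by positivity
  rw [integral_comp_mul_left (fun u => cos u ^ (n + 2)) h2π,
    integral_comp_mul_left (fun u => cos u ^ n) h2π, integral_cos_pow]
  simp only [mul_zero, mul_one, sin_two_pi, sin_zero, smul_eq_mul]
  ring

theorem integral_cos_two_pi_mul_sq : ∫ s in (0:ℝ)..1, cos (2 * π * s) ^ 2 = 1 / 2 := by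
  simpa using integral_cos_two_pi_mul_pow_add_two 0

theorem integral_cos_two_pi_mul_pow_four : ∫ s in (0:ℝ)..1, cos (2 * π * s) ^ 4 = 3 / 8 := by
  rw [integral_cos_two_pi_mul_pow_add_two 2, integral_cos_two_pi_mul_sq]
  norm_num

theorem sub_le_mul_sin_mul {x : ℝ} (hx : 0 ≤ x) (c : ℝ) :
    x * c ^ 2 - x ^ 3 * c ^ 4 / 6 ≤ c * sin (x * c) := by
  rcases le_total 0 c with hc | hc
  · linear_combination c * sin_ge_sub_cube (mul_nonneg hx hc)
  · rw [show x * c = -(x * -c) by ring, sin_neg]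
    linear_combination
      mul_le_mul_of_nonneg_left (sin_ge_sub_cube (mul_nonneg hx (neg_nonneg.mpr hc)))
        (neg_nonneg.mpr hc)

theorem sub_le_integral_cos_mul_sin {x : ℝ} (hx : 0 ≤ x) :
    x / 2 - x ^ 3 / 16 ≤
      ∫ s in (0:ℝ)..1, cos (2 * π * s) * sin (x * cos (2 * π * s)) := by
  have hmoments : ∫ s in (0:ℝ)..1, (x * cos (2 * π * s) ^ 2 - x ^ 3 * cos (2 * π * s) ^ 4 / 6)
      = x / 2 - x ^ 3 / 16 := by
    rw [integral_sub ((by fun_prop : Continuous _).intervalIntegrable _ _)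
      ((by fun_prop : Continuous _).intervalIntegrable _ _), integral_div, integral_const_mul,
      integral_const_mul, integral_cos_two_pi_mul_sq, integral_cos_two_pi_mul_pow_four]
    ring
  rw [← hmoments]
  exact integral_mono_on zero_le_one ((by fun_prop : Continuous _).intervalIntegrable _ _)
    ((by fun_prop : Continuous _).intervalIntegrable _ _)
    fun s _ => sub_le_mul_sin_mul hx _

/-- On `[0, 2.4]`, `J₀` is differentiable with derivative
`J₀'(x) = −∫₀¹ cos(2πs)·sin(x·cos(2πs)) ds`, and `J₀'(x) ≤ −x/8`. -/
theorem stmt16 :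
    ∀ x ∈ Set.Icc (0:ℝ) 2.4,
      HasDerivAt J0
        (-∫ s in (0:ℝ)..1, Real.cos (2 * Real.pi * s) *
            Real.sin (x * Real.cos (2 * Real.pi * s))) x ∧
      (-∫ s in (0:ℝ)..1, Real.cos (2 * Real.pi * s) *
          Real.sin (x * Real.cos (2 * Real.pi * s))) ≤ -x / 8 := by
  rintro x ⟨hx0, hx⟩
  refine ⟨hasDerivAt_integral_cos_mul (by fun_prop) 0 1 x, ?_⟩
  nlinarith [sub_le_integral_cos_mul_sin hx0, mul_nonneg hx0 (by nlinarith : (0:ℝ) ≤ 6 - x ^ 2)]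

end
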